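/- Let V be a real vector space with a distinguished element 𝟙, let L₀, L₁ : V → V be linear maps, and let μ₀, μ₁, μ_ε : V → ℝ be linear functionals satisfying: μ₀(𝟙) = 1, μ_ε(𝟙) = 1, μ₁(𝟙) = 0; μ₀(L₀ f) = 0 for all f ∈ V; and μ₁(L₀ f) = −μ₀(L₁ f) for all f ∈ V. Fix ε ∈ ℝ, ζ ∈ V, and suppose there exist F₀, F₁ ∈ V and constants c₀, c₁ ∈ ℝ solving the Poisson equations L₀ F₀ = ζ − c₀·𝟙 and L₀ F₁ + L₁ F₀ = −c₁·𝟙, and suppose furthermore that μ_ε( (L₀ + ε² L₁)(F₀ + ε² F₁) ) = 0. Then μ₀(ζ) = c₀, μ₁(ζ) = c₁, and μ_ε(ζ) − μ₀(ζ) − ε² μ₁(ζ) = −ε⁴ · μ_ε(L₁ F₁). -/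
import Mathlib

/-- Remainder Proposition (Section 4), algebraic content: from the Poisson
equations `L₀F₀ = ζ − c₀𝟙` and `L₀F₁ + L₁F₀ = −c₁𝟙` together with the
invariance relation `μ_ε((L₀ + ε²L₁)(F₀ + ε²F₁)) = 0` one obtains
`μ₀(ζ) = c₀`, `μ₁(ζ) = c₁` and the exact remainder identity
`μ_ε(ζ) − μ₀(ζ) − ε²μ₁(ζ) = −ε⁴ μ_ε(L₁F₁)`. -/
theorem stmt_6
    {V : Type*} [AddCommGroup V] [Module ℝ V]
    (one : V)
    (L₀ L₁ : V →ₗ[ℝ] V)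
    (μ₀ μ₁ με : V →ₗ[ℝ] ℝ)
    (hμ₀1 : μ₀ one = 1) (hμε1 : με one = 1) (hμ₁1 : μ₁ one = 0)
    (hμ₀L₀ : ∀ f : V, μ₀ (L₀ f) = 0)
    (hμ₁L₀ : ∀ f : V, μ₁ (L₀ f) = -μ₀ (L₁ f))
    (ε : ℝ) (ζ : V)
    (F₀ F₁ : V) (c₀ c₁ : ℝ)
    (hF₀ : L₀ F₀ = ζ - c₀ • one)
    (hF₁ : L₀ F₁ + L₁ F₀ = -c₁ • one)
    (hinv : με ((L₀ + ε ^ 2 • L₁) (F₀ + ε ^ 2 • F₁)) = 0) :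
    μ₀ ζ = c₀ ∧ μ₁ ζ = c₁ ∧
      με ζ - μ₀ ζ - ε ^ 2 * μ₁ ζ = -(ε ^ 4) * με (L₁ F₁) := by
  have h1 : μ₀ ζ = c₀ := by
    have := hμ₀L₀ F₀
    rw [hF₀] at this
    simp [hμ₀1] at this
    linarith
  have hb : μ₀ (L₁ F₀) = -c₁ := by
    have := congrArg μ₀ hF₁
    simp [hμ₀L₀ F₁, hμ₀1] at this
    linarith
  have h2 : μ₁ ζ = c₁ := by
    have := hμ₁L₀ F₀
    rw [hF₀, hb] at this
    simp [hμ₁1] at this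
    linarith
  refine ⟨h1, h2, ?_⟩
  have hε : με (L₀ F₀) + (ε ^ 2 * με (L₁ F₀) + (ε ^ 2 * με (L₀ F₁)
      + ε ^ 2 * (ε ^ 2 * με (L₁ F₁)))) = 0 := by
    simpa [map_add, map_smul, mul_add, add_assoc, mul_comm, mul_left_comm] using hinv
  have hA : με (L₀ F₀) = με ζ - c₀ := by
    rw [hF₀]; simp [hμε1]
  have hB : με (L₀ F₁) + με (L₁ F₀) = -c₁ := by
    have := congrArg με hF₁
    simpa [hμε1] using this
  have hε4 : ε ^ 2 * ε ^ 2 = ε ^ 4 := by ring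
  nlinarith [hε, hA, hB]
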